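/- Every linearly ordered SMV-algebra is an SMMV-algebra, i.e., if the MV-reduct of an SMV-algebra (A, τ) is totally ordered then τ(x⊕y) = τ(x)⊕τ(y) for all x, y. -/

import Mathlib

/-- An MV-algebra `(A, ⊕, ¬, 0)`. -/
class MV (A : Type*) extends Zero A where
  oplus : A → A → A
  mvneg : A → A
  oplus_assoc : ∀ x y z : A, oplus (oplus x y) z = oplus x (oplus y z)
  oplus_comm : ∀ x y : A, oplus x y = oplus y x
  oplus_zero : ∀ x : A, oplus x 0 = x
  mvneg_mvneg : ∀ x : A, mvneg (mvneg x) = x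
  oplus_top : ∀ x : A, oplus x (mvneg 0) = mvneg 0
  luk : ∀ x y : A, oplus (mvneg (oplus (mvneg x) y)) y = oplus (mvneg (oplus (mvneg y) x)) x

namespace MV

variable {A : Type*} [MV A]

/-- The top element `1 = ¬0`. -/
def top : A := mvneg 0
/-- `x → y := ¬x ⊕ y`. -/
def imp (x y : A) : A := oplus (mvneg x) y
/-- `x ⊙ y := ¬(¬x ⊕ ¬y)`. -/
def odot (x y : A) : A := mvneg (oplus (mvneg x) (mvneg y))
/-- `x ⊖ y := ¬(¬x ⊕ y)`. -/
def ominus (x y : A) : A := mvneg (oplus (mvneg x) y)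
/-- Lattice join `x ∨ y := (x → y) → y`. -/
def mvsup (x y : A) : A := imp (imp x y) y
/-- Lattice meet `x ∧ y := x ⊙ (x → y)`. -/
def mvinf (x y : A) : A := odot x (imp x y)
/-- The lattice order: `x ≤ y` iff `x → y = 1`. -/
def mvle (x y : A) : Prop := imp x y = top
/-- Strict order. -/
def mvlt (x y : A) : Prop := mvle x y ∧ x ≠ y

/-- `(A, τ)` is an SMV-algebra. -/
structure IsSMV (τ : A → A) : Prop where
  map_top : τ top = top
  tau_oplus : ∀ x y : A, τ (oplus x y) = oplus (τ x) (τ (ominus y (odot x y)))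
  map_neg : ∀ x : A, τ (mvneg x) = mvneg (τ x)
  tau_fix : ∀ x y : A, τ (oplus (τ x) (τ y)) = oplus (τ x) (τ y)

/-- `(A, τ)` is a state morphism MV-algebra. -/
def IsSMMV (τ : A → A) : Prop := IsSMV τ ∧ ∀ x y : A, τ (oplus x y) = oplus (τ x) (τ y)

/-- An MV-filter. -/
structure IsFilter (F : Set A) : Prop where
  top_mem : top ∈ F
  mp : ∀ a b : A, a ∈ F → imp a b ∈ F → b ∈ F

/-- A `τ`-filter: an MV-filter closed under `τ`. -/
def IsTauFilter (τ : A → A) (F : Set A) : Prop := IsFilter F ∧ ∀ a ∈ F, τ a ∈ F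

/-- Subdirect irreducibility of an SMV-algebra: there is a minimum nontrivial `τ`-filter. -/
def SubdirIrrSMV (τ : A → A) : Prop :=
  ∃ F : Set A, IsTauFilter τ F ∧ F ≠ {top} ∧
    ∀ G : Set A, IsTauFilter τ G → G ≠ {top} → F ⊆ G

/-- A filter of the subalgebra/subhoop with universe `S`. -/
def IsFilterOn (S F : Set A) : Prop :=
  F ⊆ S ∧ top ∈ F ∧ ∀ a b : A, a ∈ F → b ∈ S → imp a b ∈ F → b ∈ F

/-- Subdirect irreducibility of the subalgebra/subhoop with universe `S`:
there is a minimum nontrivial filter on `S`. -/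
def SubdirIrrOn (S : Set A) : Prop :=
  ∃ F : Set A, IsFilterOn S F ∧ F ≠ {top} ∧
    ∀ G : Set A, IsFilterOn S G → G ≠ {top} → F ⊆ G

/-- The set `F_τ(A) = {a : τ a = 1}`. -/
def tauKernel (τ : A → A) : Set A := {a : A | τ a = top}

/-- Homomorphisms of MV-algebras. -/
structure IsMVHom {A B : Type*} [MV A] [MV B] (f : A → B) : Prop where
  map_oplus : ∀ x y : A, f (oplus x y) = oplus (f x) (f y)
  map_neg : ∀ x : A, f (mvneg x) = mvneg (f x)
  map_zero : f 0 = 0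

end MV

open MV

instance MV.instProd {A B : Type*} [MV A] [MV B] : MV (A × B) where
  oplus x y := (oplus x.1 y.1, oplus x.2 y.2)
  mvneg x := (mvneg x.1, mvneg x.2)
  oplus_assoc x y z := by simp [oplus_assoc]
  oplus_comm x y := by simp [oplus_comm x.1 y.1, oplus_comm x.2 y.2]
  oplus_zero x := by simp [oplus_zero]
  mvneg_mvneg x := by simp [mvneg_mvneg]
  oplus_top x := by simp [oplus_top]
  luk x y := by simp [luk]

instance MV.instPi {I : Type*} {A : I → Type*} [∀ i, MV (A i)] : MV (∀ i, A i) where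
  oplus x y i := oplus (x i) (y i)
  mvneg x i := mvneg (x i)
  oplus_assoc x y z := by funext i; simp [oplus_assoc]
  oplus_comm x y := by funext i; exact oplus_comm _ _
  oplus_zero x := by funext i; exact oplus_zero _
  mvneg_mvneg x := by funext i; exact mvneg_mvneg _
  oplus_top x := by funext i; exact oplus_top _
  luk x y := by funext i; exact luk _ _

/-!
In a chain either `¬x ≤ y` or `y ≤ ¬x`. In the second case `x ⊙ y = 0`, so `y ⊖ (x ⊙ y) = y`
and the SMV axiom for `τ (x ⊕ y)` is already additivity. In the first case `x ⊕ y = 1`, and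
`y = ¬x ∨ y = ¬x ⊕ (x ⊙ y)`, so the SMV axiom gives `τ y = ¬τ x ⊕ w` for some `w`; hence
`τ x ⊕ τ y = 1 = τ (x ⊕ y)` as well.
-/

namespace MV

variable {A : Type*} [MV A]

theorem zero_oplus (x : A) : oplus 0 x = x := by
  rw [oplus_comm, oplus_zero]

theorem top_oplus (x : A) : oplus top x = top := by
  rw [oplus_comm, top, oplus_top]

theorem mvneg_top : mvneg (top : A) = 0 := by
  rw [top, mvneg_mvneg]

theorem mvneg_oplus_self (x : A) : oplus (mvneg x) x = top := by
  have h := luk x (mvneg 0)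
  rwa [oplus_top, mvneg_mvneg, zero_oplus, eq_comm] at h

theorem oplus_mvneg_self (x : A) : oplus x (mvneg x) = top := by
  rw [oplus_comm, mvneg_oplus_self]

theorem mvsup_comm (x y : A) : mvsup x y = mvsup y x :=
  luk x y

theorem mvsup_eq_right {x y : A} (h : mvle x y) : mvsup x y = y := by
  rw [mvsup, h, imp, mvneg_top, zero_oplus]

theorem mvneg_oplus_odot (x y : A) : oplus (mvneg x) (odot x y) = mvsup y (mvneg x) := by
  rw [mvsup, imp, imp, odot, oplus_comm (mvneg x), oplus_comm (mvneg y)]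

theorem oplus_eq_top_of_mvneg_le {x y : A} (h : mvle (mvneg x) y) : oplus x y = top := by
  rwa [mvle, imp, mvneg_mvneg] at h

theorem odot_eq_zero_of_le_mvneg {x y : A} (h : mvle y (mvneg x)) : odot x y = 0 := by
  rw [mvle, imp, oplus_comm] at h
  rw [odot, h, mvneg_top]

theorem mvneg_oplus_odot_of_mvneg_le {x y : A} (h : mvle (mvneg x) y) :
    oplus (mvneg x) (odot x y) = y := by
  rw [mvneg_oplus_odot, mvsup_comm, mvsup_eq_right h]

namespace IsSMV

variable {τ : A → A}

theorem map_oplus_of_odot_eq_zero (hτ : IsSMV τ) {x y : A} (h : odot x y = 0) :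
    τ (oplus x y) = oplus (τ x) (τ y) := by
  rw [hτ.tau_oplus, h, ominus, oplus_zero, mvneg_mvneg]

theorem oplus_map_mvneg_oplus (hτ : IsSMV τ) (x z : A) :
    oplus (τ x) (τ (oplus (mvneg x) z)) = top := by
  rw [hτ.tau_oplus, hτ.map_neg, ← oplus_assoc, oplus_mvneg_self, top_oplus]

theorem map_oplus_of_mvneg_le (hτ : IsSMV τ) {x y : A} (h : mvle (mvneg x) y) :
    τ (oplus x y) = oplus (τ x) (τ y) := by
  have hy := hτ.oplus_map_mvneg_oplus x (odot x y)
  rw [mvneg_oplus_odot_of_mvneg_le h] at hy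
  rw [hy, oplus_eq_top_of_mvneg_le h, hτ.map_top]

end IsSMV

end MV

/-- Every linearly ordered SMV-algebra is an SMMV-algebra. -/
theorem linear_smv_is_smmv {A : Type*} [MV A] (τ : A → A) (h : IsSMV τ)
    (htot : ∀ x y : A, mvle x y ∨ mvle y x) :
    ∀ x y : A, τ (oplus x y) = oplus (τ x) (τ y) := by
  intro x y
  rcases htot (mvneg x) y with hle | hle
  · exact h.map_oplus_of_mvneg_le hle
  · exact h.map_oplus_of_odot_eq_zero (odot_eq_zero_of_le_mvneg hle)
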